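/- Let (λ_i)_{i≥0} be a strictly increasing sequence of positive reals converging to a finite limit λ_*, set d_k = λ_{2k} − λ_{2k−1}, assume ∑_{k=1}^∞ d_k < ∞, and let (P_i)_{i≥1} satisfy λ_{2i−1} ≤ P_i ≤ λ_{2i} for all i. Then the partial products U_g(μ) = ∏_{i=1}^g ((P_i − μ)/(λ_* − μ))·E_i((λ_* − λ_{2i})/(λ_* − μ)) converge as g → ∞, uniformly on each set {μ ∈ ℂ : |μ − λ_*| ≥ D} (D > 0), to a function U defined on ℂ \ {λ_*}, and U is holomorphic (complex differentiable) on ℂ \ {λ_*}. -/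

import Mathlib

/-!
In the variable `z = 1 / (λ_* − μ)` the `i`-th factor is `(1 − aᵢ z) Eᵢ(bᵢ z)` with
`aᵢ = λ_* − Pᵢ` and `bᵢ = λ_* − λ_{2i}`. Comparing `log (1 − w)` with its Taylor polynomial gives
`|(1 − w) Eₙ(w) − 1| ≤ 4 |w|ⁿ⁺¹` and `|Eₙ(w)| ≤ 6` for `|w| ≤ 1/2`, hence
`|(1 − a z) Eₙ(b z) − 1| ≤ 4 |b z|ⁿ⁺¹ + 6 |a − b| |z|`. Since `bᵢ → 0` and `|aᵢ − bᵢ| ≤ dᵢ` is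
summable, the product converges uniformly on every disc `|z| ≤ R` to an entire function `V`, and
`U(μ) = V(1 / (λ_* − μ))`: the region `|μ − λ_*| ≥ D` is mapped into the disc of radius `1 / D`.
-/

open Filter

/-- The truncated exponential factor `E_n(z) = exp(z + z²/2 + ⋯ + zⁿ/n)`. -/
noncomputable def En (n : ℕ) (z : ℂ) : ℂ :=
  Complex.exp (∑ k ∈ Finset.Icc 1 n, z ^ k / (k : ℂ))

open Finset Metric Topology

lemma logTaylor_succ_neg (n : ℕ) (w : ℂ) :
    Complex.logTaylor (n + 1) (-w) = -∑ k ∈ Icc 1 n, w ^ k / k := by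
  rw [Complex.logTaylor, range_eq_Ico, sum_eq_sum_Ico_succ_bot n.succ_pos, Nat.succ_eq_add_one,
    Ico_add_one_right_eq_Icc, ← sum_neg_distrib]
  simp only [CharP.cast_eq_zero, div_zero, zero_add]
  refine sum_congr rfl fun k _ => ?_
  rw [neg_pow w, ← mul_assoc, ← pow_add, show k + 1 + k = 2 * k + 1 by ring, pow_succ, pow_mul]
  norm_num [neg_div]

lemma differentiable_En (n : ℕ) : Differentiable ℂ (En n) := by
  unfold En; fun_prop

lemma norm_one_sub_mul_En_sub_one_le (n : ℕ) {w : ℂ} (hw : ‖w‖ ≤ 1 / 2) :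
    ‖(1 - w) * En n w - 1‖ ≤ 4 * ‖w‖ ^ (n + 1) := by
  have hw1 : ‖w‖ < 1 := hw.trans_lt (by norm_num)
  have hslit : 1 - w ∈ Complex.slitPlane := by
    simpa [sub_eq_add_neg] using Complex.mem_slitPlane_of_norm_lt_one (z := -w) (by simpa using hw1)
  set L := Complex.log (1 - w) + ∑ k ∈ Icc 1 n, w ^ k / k
  have hL : ‖L‖ ≤ 2 * ‖w‖ ^ (n + 1) := by
    have h := Complex.norm_log_one_sub_inv_add_logTaylor_neg_le n hw1
    rw [Complex.log_inv _ (Complex.slitPlane_arg_ne_pi hslit), logTaylor_succ_neg, ← neg_add,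
      norm_neg] at h
    refine h.trans ?_
    have hinv : (1 - ‖w‖)⁻¹ ≤ 2 := by
      rw [inv_le_comm₀ (by linarith) (by norm_num)]; linarith
    calc ‖w‖ ^ (n + 1) * (1 - ‖w‖)⁻¹ / (n + 1) ≤ ‖w‖ ^ (n + 1) * 2 / 1 := by
          gcongr; linarith [n.cast_nonneg (α := ℝ)]
      _ = 2 * ‖w‖ ^ (n + 1) := by ring
  have hpow : ‖w‖ ^ (n + 1) ≤ 1 / 2 :=
    (pow_le_of_le_one (norm_nonneg w) (by linarith) n.add_one_ne_zero).trans hw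
  calc ‖(1 - w) * En n w - 1‖ = ‖Complex.exp L - 1‖ := by
        rw [Complex.exp_add, Complex.exp_log (Complex.slitPlane_ne_zero hslit), En]
    _ ≤ 2 * ‖L‖ := Complex.norm_exp_sub_one_le (by linarith)
    _ ≤ 4 * ‖w‖ ^ (n + 1) := by linarith

lemma norm_En_le_six (n : ℕ) {w : ℂ} (hw : ‖w‖ ≤ 1 / 2) : ‖En n w‖ ≤ 6 := by
  have h₁ : 1 / 2 ≤ ‖1 - w‖ := by
    have := norm_sub_norm_le (1 : ℂ) w
    rw [norm_one] at this; linarith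
  have h₂ : ‖(1 - w) * En n w‖ ≤ 3 := by
    have hpow : ‖w‖ ^ (n + 1) ≤ 1 / 2 :=
      (pow_le_of_le_one (norm_nonneg w) (by linarith) n.add_one_ne_zero).trans hw
    calc ‖(1 - w) * En n w‖ ≤ ‖(1 - w) * En n w - 1‖ + ‖(1 : ℂ)‖ := norm_le_norm_sub_add _ _
      _ ≤ 4 * ‖w‖ ^ (n + 1) + 1 := by
        rw [norm_one]; gcongr; exact norm_one_sub_mul_En_sub_one_le n hw
      _ ≤ 3 := by linarith
  rw [norm_mul] at h₂
  nlinarith [norm_nonneg (En n w)]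

lemma norm_one_sub_mul_En_sub_one_le_add (n : ℕ) (v : ℂ) {w : ℂ} (hw : ‖w‖ ≤ 1 / 2) :
    ‖(1 - v) * En n w - 1‖ ≤ 4 * ‖w‖ ^ (n + 1) + 6 * ‖v - w‖ := by
  calc ‖(1 - v) * En n w - 1‖ = ‖((1 - w) * En n w - 1) + (w - v) * En n w‖ := by ring_nf
    _ ≤ ‖(1 - w) * En n w - 1‖ + ‖w - v‖ * ‖En n w‖ := (norm_add_le _ _).trans_eq (by rw [norm_mul])
    _ ≤ 4 * ‖w‖ ^ (n + 1) + 6 * ‖v - w‖ := by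
      rw [norm_sub_rev w v]
      nlinarith [norm_one_sub_mul_En_sub_one_le n hw, norm_En_le_six n hw, norm_nonneg (v - w)]

/-- With `a = b` this is the Weierstrass elementary factor of order `n + 1` with zero `1 / a n`. -/
noncomputable def weierstrassFactor (a b : ℕ → ℂ) (n : ℕ) (z : ℂ) : ℂ :=
  (1 - a n * z) * En (n + 1) (b n * z)

lemma differentiable_weierstrassFactor (a b : ℕ → ℂ) (n : ℕ) :
    Differentiable ℂ (weierstrassFactor a b n) := by
  unfold weierstrassFactor
  have := differentiable_En (n + 1)
  fun_prop

section WeierstrassProduct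

variable {a b : ℕ → ℂ}

lemma eventually_norm_weierstrassFactor_sub_one_le (hb : Tendsto b atTop (𝓝 0)) (R : ℝ) :
    ∀ᶠ n in atTop, ∀ z ∈ closedBall (0 : ℂ) R,
      ‖weierstrassFactor a b n z - 1‖ ≤ 4 * (1 / 2) ^ (n + 2) + 6 * R * ‖a n - b n‖ := by
  have hsmall : ∀ᶠ n in atTop, ‖b n‖ * R ≤ 1 / 2 := by
    have : Tendsto (fun n => ‖b n‖ * R) atTop (𝓝 0) := by
      simpa using (tendsto_norm_zero.comp hb).mul_const R
    exact this.eventually (eventually_le_nhds (by norm_num))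
  filter_upwards [hsmall] with n hn z hz
  rw [mem_closedBall_zero_iff] at hz
  have hbz : ‖b n * z‖ ≤ 1 / 2 :=
    (norm_mul_le _ _).trans ((mul_le_mul_of_nonneg_left hz (norm_nonneg _)).trans hn)
  calc ‖weierstrassFactor a b n z - 1‖
      ≤ 4 * ‖b n * z‖ ^ (n + 2) + 6 * ‖a n * z - b n * z‖ :=
        norm_one_sub_mul_En_sub_one_le_add (n + 1) _ hbz
    _ ≤ 4 * (1 / 2) ^ (n + 2) + 6 * R * ‖a n - b n‖ := by
        rw [← sub_mul, norm_mul (a n - b n)]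
        have := pow_le_pow_left₀ (norm_nonneg _) hbz (n + 2)
        have := mul_le_mul_of_nonneg_left hz (norm_nonneg (a n - b n))
        linarith

lemma hasProdUniformlyOn_weierstrassFactor (hb : Tendsto b atTop (𝓝 0))
    (hab : Summable fun n => ‖a n - b n‖) (R : ℝ) :
    HasProdUniformlyOn (weierstrassFactor a b) (fun z => ∏' n, weierstrassFactor a b n z)
      (closedBall 0 R) := by
  have hgeom : Summable fun n : ℕ => (1 / 2 : ℝ) ^ (n + 2) :=
    (summable_nat_add_iff 2).2 (summable_geometric_of_lt_one (by norm_num) (by norm_num))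
  have hu : Summable fun n : ℕ => 4 * (1 / 2 : ℝ) ^ (n + 2) + 6 * R * ‖a n - b n‖ :=
    (hgeom.mul_left 4).add (hab.mul_left (6 * R))
  simpa using Summable.hasProdUniformlyOn_nat_one_add (isCompact_closedBall 0 R) hu
    (eventually_norm_weierstrassFactor_sub_one_le hb R)
    fun n => ((differentiable_weierstrassFactor a b n).continuous.sub continuous_const).continuousOn

lemma differentiable_tprod_weierstrassFactor (hb : Tendsto b atTop (𝓝 0))
    (hab : Summable fun n => ‖a n - b n‖) :
    Differentiable ℂ fun z => ∏' n, weierstrassFactor a b n z := by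
  have hloc : TendstoLocallyUniformlyOn (fun g z => ∏ n ∈ range g, weierstrassFactor a b n z)
      (fun z => ∏' n, weierstrassFactor a b n z) atTop Set.univ := by
    refine (tendstoLocallyUniformlyOn_iff_forall_isCompact isOpen_univ).2 fun K _ hK => ?_
    obtain ⟨R, hKR⟩ := hK.isBounded.subset_closedBall 0
    exact ((hasProdUniformlyOn_weierstrassFactor hb hab R).tendstoUniformlyOn_finsetRange).mono hKR
  rw [← differentiableOn_univ]
  refine hloc.differentiableOn (Eventually.of_forall fun g => ?_) isOpen_univ
  exact (Differentiable.fun_finsetProd fun n _ =>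
    differentiable_weierstrassFactor a b n).differentiableOn

lemma tendstoUniformlyOn_prod_weierstrassFactor_inv_sub (hb : Tendsto b atTop (𝓝 0))
    (hab : Summable fun n => ‖a n - b n‖) (c : ℂ) {D : ℝ} (hD : 0 < D) :
    TendstoUniformlyOn (fun g μ => ∏ n ∈ range g, weierstrassFactor a b n (c - μ)⁻¹)
      (fun μ => ∏' n, weierstrassFactor a b n (c - μ)⁻¹) atTop {μ | D ≤ ‖μ - c‖} := by
  have hmaps : {μ : ℂ | D ≤ ‖μ - c‖} ⊆ (fun μ => (c - μ)⁻¹) ⁻¹' closedBall 0 D⁻¹ := by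
    intro μ hμ
    simp only [Set.mem_preimage, mem_closedBall_zero_iff, norm_inv]
    exact inv_anti₀ hD (by rwa [norm_sub_rev])
  exact ((hasProdUniformlyOn_weierstrassFactor hb hab D⁻¹).tendstoUniformlyOn_finsetRange.comp
    _).mono hmaps

lemma differentiableOn_tprod_weierstrassFactor_inv_sub (hb : Tendsto b atTop (𝓝 0))
    (hab : Summable fun n => ‖a n - b n‖) (c : ℂ) :
    DifferentiableOn ℂ (fun μ => ∏' n, weierstrassFactor a b n (c - μ)⁻¹) {μ | μ ≠ c} :=
  (differentiable_tprod_weierstrassFactor hb hab).comp_differentiableOn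
    (((differentiableOn_const c).sub differentiableOn_id).inv
      fun _ hμ => sub_ne_zero.2 (Ne.symm hμ))

end WeierstrassProduct

lemma sub_div_mul_En_div_eq (n : ℕ) (p c l : ℂ) {μ : ℂ} (hμ : c - μ ≠ 0) :
    (p - μ) / (c - μ) * En n ((c - l) / (c - μ)) =
      (1 - (c - p) * (c - μ)⁻¹) * En n ((c - l) * (c - μ)⁻¹) := by
  rw [← div_eq_mul_inv, ← div_eq_mul_inv]
  congr 1
  field_simp
  ring

lemma prod_Icc_one_eq_prod_range {M : Type*} [CommMonoid M] (f : ℕ → M) (g : ℕ) :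
    ∏ i ∈ Icc 1 g, f i = ∏ n ∈ range g, f (n + 1) := by
  rw [range_eq_Ico, prod_Ico_add', zero_add, Ico_add_one_right_eq_Icc]

theorem partial_products_tendstoUniformly_holomorphic_general
    (lam : ℕ → ℝ) (lamStar : ℝ)
    (hlim : Tendsto lam atTop (nhds lamStar))
    (hd : Summable (fun k : ℕ => lam (2 * k + 2) - lam (2 * k + 1)))
    (P : ℕ → ℝ) (hP : ∀ i : ℕ, lam (2 * i + 1) ≤ P (i + 1) ∧ P (i + 1) ≤ lam (2 * i + 2)) :
    ∃ U : ℂ → ℂ,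
      (∀ D : ℝ, 0 < D →
        TendstoUniformlyOn
          (fun (g : ℕ) (μ : ℂ) => ∏ i ∈ Finset.Icc 1 g,
            ((((P i : ℝ) : ℂ) - μ) / ((lamStar : ℂ) - μ) *
              En i (((lamStar : ℂ) - ((lam (2 * i) : ℝ) : ℂ)) / ((lamStar : ℂ) - μ))))
          U atTop {μ : ℂ | D ≤ ‖μ - (lamStar : ℂ)‖}) ∧
      DifferentiableOn ℂ U {μ : ℂ | μ ≠ (lamStar : ℂ)} := by
  set a : ℕ → ℂ := fun n => ((lamStar - P (n + 1) : ℝ) : ℂ)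
  set b : ℕ → ℂ := fun n => ((lamStar - lam (2 * n + 2) : ℝ) : ℂ)
  have hb : Tendsto b atTop (𝓝 0) := by
    have h : Tendsto (fun n => lamStar - lam (2 * n + 2)) atTop (𝓝 0) := by
      simpa using (hlim.comp (tendsto_atTop_mono (fun n => by simp only [id]; omega)
        tendsto_id)).const_sub lamStar
    exact (Complex.continuous_ofReal.tendsto' 0 0 Complex.ofReal_zero).comp h
  have hab : Summable fun n => ‖a n - b n‖ := by
    refine hd.of_nonneg_of_le (fun n => norm_nonneg _) fun n => ?_
    rw [← Complex.ofReal_sub, Complex.norm_real, Real.norm_eq_abs, abs_le]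
    constructor <;> linarith [hP n]
  refine ⟨_, fun D hD => (tendstoUniformlyOn_prod_weierstrassFactor_inv_sub hb hab _ hD).congr
    (Eventually.of_forall fun g μ hμD => ?_),
    differentiableOn_tprod_weierstrassFactor_inv_sub hb hab _⟩
  have hμ : (lamStar : ℂ) - μ ≠ 0 := by
    rw [← norm_pos_iff, norm_sub_rev]
    exact hD.trans_le hμD
  beta_reduce
  rw [prod_Icc_one_eq_prod_range]
  refine prod_congr rfl fun n _ => ?_
  rw [sub_div_mul_En_div_eq _ _ _ _ hμ, weierstrassFactor, mul_add, mul_one]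
  simp only [a, b, Complex.ofReal_sub]

/-- The partial products
`U_g(μ) = ∏_{i=1}^g ((P_i − μ)/(λ_* − μ))·E_i((λ_* − λ_{2i})/(λ_* − μ))`
converge as `g → ∞`, uniformly on each set `{μ : |μ − λ_*| ≥ D}`, to a function `U`
holomorphic on `ℂ \ {λ_*}`. -/
theorem partial_products_tendstoUniformly_holomorphic
    (lam : ℕ → ℝ) (lamStar : ℝ) (hmono : StrictMono lam) (hpos : ∀ i, 0 < lam i)
    (hlim : Tendsto lam atTop (nhds lamStar))
    (hd : Summable (fun k : ℕ => lam (2 * k + 2) - lam (2 * k + 1)))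
    (P : ℕ → ℝ) (hP : ∀ i : ℕ, lam (2 * i + 1) ≤ P (i + 1) ∧ P (i + 1) ≤ lam (2 * i + 2)) :
    ∃ U : ℂ → ℂ,
      (∀ D : ℝ, 0 < D →
        TendstoUniformlyOn
          (fun (g : ℕ) (μ : ℂ) => ∏ i ∈ Finset.Icc 1 g,
            ((((P i : ℝ) : ℂ) - μ) / ((lamStar : ℂ) - μ) *
              En i (((lamStar : ℂ) - ((lam (2 * i) : ℝ) : ℂ)) / ((lamStar : ℂ) - μ))))
          U atTop {μ : ℂ | D ≤ ‖μ - (lamStar : ℂ)‖}) ∧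
      DifferentiableOn ℂ U {μ : ℂ | μ ≠ (lamStar : ℂ)} :=
  partial_products_tendstoUniformly_holomorphic_general lam lamStar hlim hd P hP
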